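/- Let k ≥ h be non-negative integers and let N ≥ 1. Then |V|_N(2k,2h) = Σ_{j=0}^{2h} binom(2h,j) · (M)_N(2k,j) · (𝔦N/2)^{2h−j}, where 𝔦 is the imaginary unit. -/

import Mathlib

open MeasureTheory Complex

noncomputable instance {N : ℕ} : MeasurableSpace (Matrix (Fin N) (Fin N) ℂ) := borel _

noncomputable def Zchar {N : ℕ} (U : Matrix.unitaryGroup (Fin N) ℂ) (θ : ℝ) : ℂ :=
  Matrix.det ((1 : Matrix (Fin N) (Fin N) ℂ)
    - Complex.exp (-(Complex.I * (θ : ℂ))) • (U : Matrix (Fin N) (Fin N) ℂ))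

noncomputable def Vchar {N : ℕ} (θj : Fin N → ℝ) (U : Matrix.unitaryGroup (Fin N) ℂ)
    (θ : ℝ) : ℂ :=
  Complex.exp (Complex.I * N * ((θ : ℂ) + (Real.pi : ℂ)) / 2)
    * Complex.exp (-(Complex.I * ((∑ j, θj j : ℝ) : ℂ)) / 2) * Zchar U θ

noncomputable def Mmom (N k r : ℕ) (μ : Measure (Matrix.unitaryGroup (Fin N) ℂ)) : ℂ :=
  ∫ U, (‖Zchar U 0‖ : ℂ) ^ (2 * k) * (deriv (Zchar U) 0 / Zchar U 0) ^ r ∂μ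


/-! If `U` has eigenvalues `w j` on the unit circle, then `Z_U(θ) = ∏ (1 - w j e^{-iθ})`, and `V_U`
is `Z_U` times a unimodular factor with logarithmic derivative `iN/2`. So `|V_U| = |Z_U|` and
`V_U'/V_U = iN/2 + Z_U'/Z_U = ∑ (i/2 + i w j / (1 - w j))`, which is real because
`Re (w / (1 - w)) = -1/2` on the unit circle. Hence `|V_U'/V_U|^{2h} = (iN/2 + Z_U'/Z_U)^{2h}`, and
the binomial theorem and linearity of the integral give the formula. Each term is integrable since
`|Z|^{2k} |Z'/Z|^j ≤ |Z|^{2k-j} |Z'|^j` is bounded for `j ≤ 2k`. -/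

open Finset Polynomial

lemma re_div_one_sub_of_norm_eq_one {w : ℂ} (hw : ‖w‖ = 1) (hw1 : w ≠ 1) :
    (w / (1 - w)).re = -(1 / 2) := by
  have hw0 : w ≠ 0 := norm_ne_zero_iff.mp (by rw [hw]; exact one_ne_zero)
  have hconj : (starRingEnd ℂ) w = w⁻¹ := by
    rw [Complex.inv_def, ← Complex.sq_norm, hw]; simp
  have h1w : 1 - w ≠ 0 := sub_ne_zero.mpr (Ne.symm hw1)
  have hsum : w / (1 - w) + (starRingEnd ℂ) (w / (1 - w)) = -1 := by
    rw [map_div₀, map_sub, map_one, hconj]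
    field_simp
    ring
  apply Complex.ofReal_injective
  rw [Complex.re_eq_add_conj, hsum]
  push_cast
  ring

lemma pow_mul_div_pow_le {x y : ℝ} {m j : ℕ} (hx : 0 ≤ x) (hy : 0 ≤ y) (hjm : j ≤ m) :
    x ^ m * (y / x) ^ j ≤ x ^ (m - j) * y ^ j := by
  obtain ⟨d, rfl⟩ := Nat.exists_eq_add_of_le hjm
  rw [add_tsub_cancel_left]
  rcases hx.eq_or_lt with rfl | hx
  · rcases j.eq_zero_or_pos with rfl | hj
    · simp
    · simp [zero_pow hj.ne', div_zero]; positivity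
  · refine le_of_eq ?_
    rw [pow_add, div_pow]
    field_simp

lemma hasDerivAt_prod_one_sub_mul_exp {ι : Type*} [Fintype ι] [DecidableEq ι] (w : ι → ℂ) :
    HasDerivAt (fun θ : ℝ => ∏ j, (1 - w j * exp (-(I * θ))))
      (∑ j, (∏ l ∈ univ.erase j, (1 - w l)) * (I * w j)) 0 := by
  have hexp : HasDerivAt (fun θ : ℝ => exp (-(I * θ))) (-I) 0 := by
    simpa using (((hasDerivAt_id (0 : ℂ)).const_mul I).neg.cexp).comp_ofReal
  refine (HasDerivAt.fun_finsetProd fun j _ => (hexp.const_mul (w j)).const_sub 1).congr_deriv ?_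
  simp [mul_comm]

lemma norm_prod_one_sub_le {ι : Type*} {w : ι → ℂ} (hw : ∀ j, ‖w j‖ = 1) (s : Finset ι) :
    ‖∏ j ∈ s, (1 - w j)‖ ≤ 2 ^ #s := by
  rw [norm_prod, ← prod_const]
  refine prod_le_prod (fun j _ => norm_nonneg _) fun j _ => (norm_sub_le _ _).trans ?_
  rw [norm_one, hw]; norm_num

lemma norm_sum_prod_erase_le {ι : Type*} [Fintype ι] [DecidableEq ι] {w : ι → ℂ}
    (hw : ∀ j, ‖w j‖ = 1) :
    ‖∑ j, (∏ l ∈ univ.erase j, (1 - w l)) * (I * w j)‖ ≤ Fintype.card ι * 2 ^ Fintype.card ι := by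
  refine (norm_sum_le _ _).trans ?_
  rw [← nsmul_eq_mul, ← card_univ, ← sum_const]
  refine sum_le_sum fun j _ => ?_
  rw [norm_mul, norm_mul, norm_I, hw, one_mul, mul_one]
  exact (norm_prod_one_sub_le hw _).trans (pow_le_pow_right₀ one_le_two (card_le_univ _))

lemma sum_prod_erase_div_prod {ι : Type*} [Fintype ι] [DecidableEq ι] {w : ι → ℂ}
    (hw : ∀ j, w j ≠ 1) :
    (∑ j, (∏ l ∈ univ.erase j, (1 - w l)) * (I * w j)) / ∏ j, (1 - w j)
      = ∑ j, I * w j / (1 - w j) := by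
  have hne : ∀ j, 1 - w j ≠ 0 := fun j => sub_ne_zero.mpr (hw j).symm
  rw [sum_div]
  refine sum_congr rfl fun j _ => ?_
  rw [← mul_prod_erase _ _ (mem_univ j), mul_comm (1 - w j),
    mul_div_mul_left _ _ (prod_ne_zero_iff.mpr fun l _ => hne l)]

lemma im_I_mul_card_div_two_add_sum {ι : Type*} [Fintype ι] {w : ι → ℂ}
    (hw : ∀ j, ‖w j‖ = 1) (hw1 : ∀ j, w j ≠ 1) :
    (I * Fintype.card ι / 2 + ∑ j, I * w j / (1 - w j)).im = 0 := by
  simp only [add_im, im_sum, mul_div_assoc, I_mul_im, re_div_one_sub_of_norm_eq_one (hw _) (hw1 _),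
    sum_const, card_univ, nsmul_eq_mul, div_ofNat_re, natCast_re]
  ring

instance {N : ℕ} : BorelSpace (Matrix (Fin N) (Fin N) ℂ) := ⟨rfl⟩

section Measurability

variable {N : ℕ}

lemma continuous_uncurry_Zchar : Continuous (Function.uncurry (Zchar (N := N))) := by
  have hexp : Continuous fun p : Matrix.unitaryGroup (Fin N) ℂ × ℝ => exp (-(I * p.2)) := by
    fun_prop
  exact (continuous_const.sub (hexp.smul (continuous_subtype_val.comp continuous_fst))).matrix_det

lemma measurable_Zchar (θ : ℝ) :
    Measurable fun U : Matrix.unitaryGroup (Fin N) ℂ => Zchar U θ :=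
  (continuous_uncurry_Zchar.comp (continuous_id.prodMk continuous_const)).measurable

lemma measurable_deriv_Zchar (θ : ℝ) :
    Measurable fun U : Matrix.unitaryGroup (Fin N) ℂ => deriv (Zchar U) θ := by
  have h := (measurable_deriv_with_param (continuous_uncurry_Zchar (N := N))).comp
    (measurable_id.prodMk (measurable_const (a := θ)))
  simpa only [Function.comp_def, id] using h

end Measurability

section Eigenvalues

variable {N : ℕ} {U : Matrix.unitaryGroup (Fin N) ℂ} {w : Fin N → ℂ}
  (hU : (U : Matrix (Fin N) (Fin N) ℂ).charpoly = ∏ j, (X - C (w j)))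
include hU

lemma Zchar_eq_prod (θ : ℝ) : Zchar U θ = ∏ j, (1 - w j * exp (-(I * θ))) := by
  set z := exp (-(I * θ))
  have hz : z ≠ 0 := exp_ne_zero _
  have hsmul : (1 : Matrix (Fin N) (Fin N) ℂ) - z • (U : Matrix (Fin N) (Fin N) ℂ)
      = z • (Matrix.scalar (Fin N) z⁻¹ - (U : Matrix (Fin N) (Fin N) ℂ)) := by
    simp [smul_sub, ← Matrix.smul_one_eq_diagonal, smul_smul, hz]
  rw [Zchar, hsmul, Matrix.det_smul, ← Matrix.eval_charpoly, hU, eval_prod, Fintype.card_fin,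
    ← Fin.prod_const, ← prod_mul_distrib]
  refine prod_congr rfl fun j _ => ?_
  simp only [eval_sub, eval_X, eval_C]
  field_simp

lemma hasDerivAt_Zchar :
    HasDerivAt (Zchar U) (∑ j, (∏ l ∈ univ.erase j, (1 - w l)) * (I * w j)) 0 := by
  rw [funext (Zchar_eq_prod hU)]
  exact hasDerivAt_prod_one_sub_mul_exp w

lemma Zchar_zero_eq_prod : Zchar U 0 = ∏ j, (1 - w j) := by
  simp [Zchar_eq_prod hU]

variable (hw : ∀ j, ‖w j‖ = 1)
include hw

lemma norm_Zchar_zero_le : ‖Zchar U 0‖ ≤ 2 ^ N := by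
  simpa [Zchar_zero_eq_prod hU] using norm_prod_one_sub_le hw univ

lemma norm_deriv_Zchar_zero_le : ‖deriv (Zchar U) 0‖ ≤ N * 2 ^ N := by
  simpa [(hasDerivAt_Zchar hU).deriv] using norm_sum_prod_erase_le hw

lemma im_I_mul_div_two_add_deriv_Zchar_div (hZ : Zchar U 0 ≠ 0) :
    (I * N / 2 + deriv (Zchar U) 0 / Zchar U 0).im = 0 := by
  have hw1 : ∀ j, w j ≠ 1 := fun j hj =>
    hZ (by rw [Zchar_zero_eq_prod hU]; exact prod_eq_zero (mem_univ j) (by rw [hj, sub_self]))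
  simpa [(hasDerivAt_Zchar hU).deriv, Zchar_zero_eq_prod hU, sum_prod_erase_div_prod hw1]
    using im_I_mul_card_div_two_add_sum hw hw1

end Eigenvalues

section Vchar

variable {N : ℕ} (t : Fin N → ℝ) (U : Matrix.unitaryGroup (Fin N) ℂ)

lemma norm_Vchar (θ : ℝ) : ‖Vchar t U θ‖ = ‖Zchar U θ‖ := by
  simp [Vchar, norm_exp, mul_re]

lemma deriv_Vchar_div {D : ℂ} (hZ : HasDerivAt (Zchar U) D 0) (hZ0 : Zchar U 0 ≠ 0) :
    deriv (Vchar t U) 0 / Vchar t U 0 = I * N / 2 + D / Zchar U 0 := by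
  have hphase : HasDerivAt (fun θ : ℝ => exp (I * N * ((θ : ℂ) + Real.pi) / 2))
      (exp (I * N * (((0 : ℝ) : ℂ) + Real.pi) / 2) * (I * N / 2)) 0 := by
    have hlin := ((((hasDerivAt_id (0 : ℝ)).ofReal_comp).add_const (Real.pi : ℂ)).const_mul
      (I * N)).div_const 2
    simpa using hlin.cexp
  have hV : HasDerivAt (Vchar t U) _ 0 :=
    (hphase.mul_const (exp (-(I * ((∑ j, t j : ℝ) : ℂ)) / 2))).mul hZ
  rw [hV.deriv, Vchar]
  field_simp

end Vchar

lemma ofReal_norm_Vchar_pow_mul_norm_pow {N k h : ℕ} (hkh : h ≤ k)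
    {U : Matrix.unitaryGroup (Fin N) ℂ} {t : Fin N → ℝ}
    (hU : (U : Matrix (Fin N) (Fin N) ℂ).charpoly = ∏ j, (X - C (exp (I * t j)))) :
    ((‖Vchar t U 0‖ ^ (2 * k) * ‖deriv (Vchar t U) 0 / Vchar t U 0‖ ^ (2 * h) : ℝ) : ℂ)
      = (‖Zchar U 0‖ : ℂ) ^ (2 * k) * (I * N / 2 + deriv (Zchar U) 0 / Zchar U 0) ^ (2 * h) := by
  -- When `Zchar U 0 = 0` both quotients are the junk value `0 / 0 = 0`.
  by_cases hZ : Zchar U 0 = 0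
  · rcases h.eq_zero_or_pos with rfl | hh
    · simp [norm_Vchar]
    · have hV : Vchar t U 0 = 0 := by simp [Vchar, hZ]
      simp [hZ, hV, show 2 * k ≠ 0 by omega]
  · have hZ' := hasDerivAt_Zchar hU
    obtain ⟨x, hx⟩ : ∃ x : ℝ, (x : ℂ) = I * N / 2 + deriv (Zchar U) 0 / Zchar U 0 :=
      ⟨_, Complex.ext rfl
        (im_I_mul_div_two_add_deriv_Zchar_div hU (fun j => norm_exp_I_mul_ofReal _) hZ).symm⟩
    rw [norm_Vchar, deriv_Vchar_div t U hZ' hZ, ← hZ'.deriv, ← hx, norm_real, Real.norm_eq_abs,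
      (even_two_mul h).pow_abs]
    push_cast
    rfl

lemma integrable_norm_Zchar_pow_mul_deriv_div_pow {N k j : ℕ} (hj : j ≤ 2 * k)
    (μ : Measure (Matrix.unitaryGroup (Fin N) ℂ)) [IsFiniteMeasure μ] {A B : ℝ}
    (hA : ∀ U : Matrix.unitaryGroup (Fin N) ℂ, ‖Zchar U 0‖ ≤ A)
    (hB : ∀ U : Matrix.unitaryGroup (Fin N) ℂ, ‖deriv (Zchar U) 0‖ ≤ B) :
    Integrable (fun U => (‖Zchar U 0‖ : ℂ) ^ (2 * k) * (deriv (Zchar U) 0 / Zchar U 0) ^ j) μ := by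
  have hmeas : Measurable fun U : Matrix.unitaryGroup (Fin N) ℂ =>
      (‖Zchar U 0‖ : ℂ) ^ (2 * k) * (deriv (Zchar U) 0 / Zchar U 0) ^ j :=
    ((measurable_ofReal.comp (measurable_Zchar 0).norm).pow_const (2 * k)).mul
      (((measurable_deriv_Zchar 0).div (measurable_Zchar 0)).pow_const j)
  refine (integrable_const (A ^ (2 * k - j) * B ^ j)).mono' hmeas.aestronglyMeasurable
    (ae_of_all _ fun U => ?_)
  rw [norm_mul, norm_pow, norm_pow, norm_real, norm_norm, norm_div]
  refine (pow_mul_div_pow_le (norm_nonneg _) (norm_nonneg _) hj).trans ?_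
  have hA0 : 0 ≤ A := (norm_nonneg _).trans (hA U)
  exact mul_le_mul (pow_le_pow_left₀ (norm_nonneg _) (hA U) _)
    (pow_le_pow_left₀ (norm_nonneg _) (hB U) _) (by positivity) (pow_nonneg hA0 _)

theorem statement0_general (N k h : ℕ) (hkh : h ≤ k)
    (μham : Measure (Matrix.unitaryGroup (Fin N) ℂ))
    [IsProbabilityMeasure μham]
    (θj : Matrix.unitaryGroup (Fin N) ℂ → Fin N → ℝ)
    (hθj : ∀ U : Matrix.unitaryGroup (Fin N) ℂ,
      (U : Matrix (Fin N) (Fin N) ℂ).charpoly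
        = ∏ j, (Polynomial.X - Polynomial.C (Complex.exp (Complex.I * (θj U j : ℂ))))) :
    ((∫ U, ‖Vchar (θj U) U 0‖ ^ (2 * k)
        * ‖deriv (Vchar (θj U) U) 0 / Vchar (θj U) U 0‖ ^ (2 * h) ∂μham : ℝ) : ℂ)
      = ∑ i ∈ Finset.range (2 * h + 1),
          (Nat.choose (2 * h) i : ℂ) * Mmom N k i μham
            * (Complex.I * N / 2) ^ (2 * h - i) := by
  have hw : ∀ U j, ‖exp (I * θj U j)‖ = 1 := fun _ _ => norm_exp_I_mul_ofReal _
  have hint : ∀ i ∈ range (2 * h + 1), Integrable (fun U => (Nat.choose (2 * h) i : ℂ)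
      * ((‖Zchar U 0‖ : ℂ) ^ (2 * k) * (deriv (Zchar U) 0 / Zchar U 0) ^ i)
      * (I * N / 2) ^ (2 * h - i)) μham := fun i hi =>
    ((integrable_norm_Zchar_pow_mul_deriv_div_pow (by rw [mem_range] at hi; omega) μham
      (fun U => norm_Zchar_zero_le (hθj U) (hw U))
      (fun U => norm_deriv_Zchar_zero_le (hθj U) (hw U))).const_mul _).mul_const _
  have hexpand : ∀ U, ((‖Vchar (θj U) U 0‖ ^ (2 * k)
      * ‖deriv (Vchar (θj U) U) 0 / Vchar (θj U) U 0‖ ^ (2 * h) : ℝ) : ℂ)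
      = ∑ i ∈ range (2 * h + 1), (Nat.choose (2 * h) i : ℂ)
        * ((‖Zchar U 0‖ : ℂ) ^ (2 * k) * (deriv (Zchar U) 0 / Zchar U 0) ^ i)
        * (I * N / 2) ^ (2 * h - i) := fun U => by
    rw [ofReal_norm_Vchar_pow_mul_norm_pow hkh (hθj U), add_comm, add_pow, mul_sum]
    exact sum_congr rfl fun i _ => by ring
  rw [← integral_complex_ofReal]
  simp_rw [hexpand]
  rw [integral_finsetSum _ hint]
  refine sum_congr rfl fun i _ => ?_
  rw [integral_mul_const, integral_const_mul, Mmom]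

theorem statement0 (N k h : ℕ) (hN : 1 ≤ N) (hkh : h ≤ k)
    (μham : Measure (Matrix.unitaryGroup (Fin N) ℂ))
    [μham.IsHaarMeasure] [IsProbabilityMeasure μham]
    (θj : Matrix.unitaryGroup (Fin N) ℂ → Fin N → ℝ)
    (hθj : ∀ U : Matrix.unitaryGroup (Fin N) ℂ,
      (U : Matrix (Fin N) (Fin N) ℂ).charpoly
        = ∏ j, (Polynomial.X - Polynomial.C (Complex.exp (Complex.I * (θj U j : ℂ))))) :
    ((∫ U, ‖Vchar (θj U) U 0‖ ^ (2 * k)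
        * ‖deriv (Vchar (θj U) U) 0 / Vchar (θj U) U 0‖ ^ (2 * h) ∂μham : ℝ) : ℂ)
      = ∑ i ∈ Finset.range (2 * h + 1),
          (Nat.choose (2 * h) i : ℂ) * Mmom N k i μham
            * (Complex.I * N / 2) ^ (2 * h - i) :=
  statement0_general N k h hkh μham θj hθj
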